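/- arXiv:2507.19955 — 4 statements merged into one kernel-verified Lean document; each statement's English description precedes it below -/
import Mathlib

section
/- Let x and y be real polynomials of degree at most k such that ∫_a^b (x′(t) − y(t))·φ(t) dt = 0 for every real polynomial φ of degree at most k−1, where x′ is the derivative of x. Then x′(t_i) = y(t_i) at every Gauss point t_i of (a,b), i = 1, …, k. (Scalar version of Lemma 5.3/Lemma 3.9 of Bause et al., the pointwise collocation property at Gauss points.) -/
/-!
Write `r = x' - y`. Since `deg r ≤ k = deg q`, division by the monic `q` gives `r = c • q + s`
with `c` constant and `deg s < k`. Both `r` and `q` are orthogonal on `(a,b)` to all polynomials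
of degree `< k`, so `s` is too; testing `s` against itself gives `∫ s² = 0`, so `s = 0`.
Hence `q ∣ r`, and `r` vanishes at the roots of `q`.
-/

open Polynomial Set MeasureTheory

namespace Polynomial

variable {a b : ℝ}

theorem eq_zero_of_intervalIntegral_eval_mul_self_eq_zero (hab : a < b) {p : ℝ[X]}
    (h : ∫ s in a..b, p.eval s * p.eval s = 0) : p = 0 := by
  by_contra hp
  obtain ⟨c, hc, hpc⟩ : ∃ c ∈ Icc a b, p.eval c ≠ 0 := by
    by_contra! hroots
    exact hp (p.eq_zero_of_infinite_isRoot ((Icc_infinite hab).mono hroots))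
  have hpos : 0 < ∫ s in a..b, p.eval s * p.eval s := by
    simpa using intervalIntegral.integral_lt_integral_of_continuousOn_of_le_of_exists_lt hab
      continuousOn_const (p.continuous.mul p.continuous).continuousOn
      (fun s _ => mul_self_nonneg (p.eval s)) ⟨c, hc, mul_self_pos.2 hpc⟩
  exact hpos.ne' h

def IsOrthogonalToDegreeLT (a b : ℝ) (k : ℕ) (p : ℝ[X]) : Prop :=
  ∀ φ : ℝ[X], φ.natDegree < k → ∫ s in a..b, p.eval s * φ.eval s = 0

namespace IsOrthogonalToDegreeLT

variable {k : ℕ} {p r : ℝ[X]}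

theorem sub (hp : IsOrthogonalToDegreeLT a b k p) (hr : IsOrthogonalToDegreeLT a b k r) :
    IsOrthogonalToDegreeLT a b k (p - r) := by
  intro φ hφ
  have hint : ∀ f : ℝ[X], IntervalIntegrable (fun s => f.eval s * φ.eval s) volume a b :=
    fun f => (f.continuous.mul φ.continuous).intervalIntegrable a b
  simp only [eval_sub, sub_mul]
  rw [intervalIntegral.integral_sub (hint p) (hint r), hp φ hφ, hr φ hφ, sub_self]

theorem mul_C (hp : IsOrthogonalToDegreeLT a b k p) (c : ℝ) :
    IsOrthogonalToDegreeLT a b k (p * C c) := by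
  intro φ hφ
  simpa only [eval_mul, eval_C, mul_assoc] using
    hp (C c * φ) ((natDegree_C_mul_le c φ).trans_lt hφ)

theorem eq_zero (hab : a < b) (hp : IsOrthogonalToDegreeLT a b k p) (hdeg : p.degree < k) :
    p = 0 := by
  by_contra hne
  exact hne (eq_zero_of_intervalIntegral_eval_mul_self_eq_zero hab
    (hp p ((natDegree_lt_iff_degree_lt hne).2 hdeg)))

theorem dvd (hr : IsOrthogonalToDegreeLT a b k r) (hab : a < b) {q : ℝ[X]} (hmonic : q.Monic)
    (hdeg : q.natDegree = k) (hq : IsOrthogonalToDegreeLT a b k q)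
    (hrdeg : r.natDegree ≤ k) : q ∣ r := by
  have hquot : (r /ₘ q).natDegree = 0 := by
    rw [natDegree_divByMonic r hmonic, hdeg]
    omega
  have hrem : IsOrthogonalToDegreeLT a b k (r %ₘ q) := by
    rw [modByMonic_eq_sub_mul_div r q, eq_C_of_natDegree_eq_zero hquot]
    exact hr.sub (hq.mul_C _)
  have hremdeg : (r %ₘ q).degree < k := by
    simpa only [degree_eq_natDegree hmonic.ne_zero, hdeg] using degree_modByMonic_lt r hmonic
  exact (modByMonic_eq_zero_iff_dvd hmonic).1 (hrem.eq_zero hab hremdeg)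

end IsOrthogonalToDegreeLT

end Polynomial

theorem collocation_at_gauss_points_general (k : ℕ) (a b : ℝ) (hab : a < b)
    (q : Polynomial ℝ) (hmonic : q.Monic) (hdeg : q.natDegree = k)
    (horth : ∀ p : Polynomial ℝ, p.natDegree < k → ∫ s in a..b, q.eval s * p.eval s = 0)
    (t : Fin k → ℝ)
    (htroot : ∀ i, q.eval (t i) = 0)
    (x y : Polynomial ℝ) (hx : x.natDegree ≤ k) (hy : y.natDegree ≤ k)
    (hweak : ∀ φ : Polynomial ℝ, φ.natDegree < k →
      ∫ s in a..b, ((Polynomial.derivative x).eval s - y.eval s) * φ.eval s = 0) :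
    ∀ i, (Polynomial.derivative x).eval (t i) = y.eval (t i) := by
  have hrdeg : (derivative x - y).natDegree ≤ k := by
    have := natDegree_derivative_le x
    exact (natDegree_sub_le _ _).trans (max_le (by omega) hy)
  have hr : IsOrthogonalToDegreeLT a b k (derivative x - y) := by
    simpa only [IsOrthogonalToDegreeLT, eval_sub] using hweak
  have hdvd : q ∣ derivative x - y := hr.dvd hab hmonic hdeg horth hrdeg
  intro i
  rw [← sub_eq_zero, ← eval_sub]
  exact eval_eq_zero_of_dvd_of_eval_eq_zero hdvd (htroot i)

/-- Pointwise collocation property at Gauss points: if the weak relation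
`∫ (x' - y) φ = 0` holds for all test polynomials of degree at most `k-1`,
then `x' = y` at every Gauss point of `(a,b)` (scalar version of Lemma 5.3). -/
theorem collocation_at_gauss_points (k : ℕ) (hk : 1 ≤ k) (a b : ℝ) (hab : a < b)
    (q : Polynomial ℝ) (hmonic : q.Monic) (hdeg : q.natDegree = k)
    (horth : ∀ p : Polynomial ℝ, p.natDegree < k → ∫ s in a..b, q.eval s * p.eval s = 0)
    (t : Fin k → ℝ) (htmono : StrictMono t) (htmem : ∀ i, t i ∈ Set.Ioo a b)
    (htroot : ∀ i, q.eval (t i) = 0)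
    (x y : Polynomial ℝ) (hx : x.natDegree ≤ k) (hy : y.natDegree ≤ k)
    (hweak : ∀ φ : Polynomial ℝ, φ.natDegree < k →
      ∫ s in a..b, ((Polynomial.derivative x).eval s - y.eval s) * φ.eval s = 0) :
    ∀ i, (Polynomial.derivative x).eval (t i) = y.eval (t i) :=
  collocation_at_gauss_points_general k a b hab q hmonic hdeg horth t htroot x y hx hy hweak
end

section
/- Let ω be a Gauss–Lobatto nodal polynomial on [a,b] with roots a = s_0 < s_1 < ⋯ < s_k = b. Let z₂ be a real polynomial of degree at most k, let C ∈ ℝ, define F(t) = C + ∫_a^t z₂(s) ds, and let z₁ be the Lagrange interpolant of F at the k+1 nodes s_0, …, s_k. Then ∫_a^b (z₁′(t) − z₂(t))·φ(t) dt = 0 for every real polynomial φ of degree at most k−1. (Scalar version of the compatibility property of the Gauss–Lobatto interpolated antiderivative, Lemma 5.3 / Karakashian–Makridakis.) -/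
/-- Compatibility property of the Gauss–Lobatto interpolated antiderivative:
if `z₁` is the Lagrange interpolant at the Gauss–Lobatto nodes of
`F(t) = C + ∫_a^t z₂`, then `∫ (z₁' - z₂) φ = 0` for all polynomials `φ` of degree
at most `k-1` (scalar version of Lemma 5.3 / Karakashian–Makridakis). -/
theorem gauss_lobatto_antiderivative_compatibility (k : ℕ) (hk : 1 ≤ k) (a b : ℝ) (hab : a < b)
    (ω : Polynomial ℝ) (hmonic : ω.Monic) (hdeg : ω.natDegree = k + 1)
    (hωa : ω.eval a = 0) (hωb : ω.eval b = 0)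
    (horth : ∀ p : Polynomial ℝ, p.natDegree + 2 ≤ k → ∫ s in a..b, ω.eval s * p.eval s = 0)
    (s : Fin (k + 1) → ℝ) (hsmono : StrictMono s) (hs0 : s 0 = a) (hsk : s (Fin.last k) = b)
    (hroot : ∀ i, ω.eval (s i) = 0)
    (z₂ : Polynomial ℝ) (hz₂ : z₂.natDegree ≤ k) (C : ℝ)
    (z₁ : Polynomial ℝ)
    (hz₁ : z₁ = Lagrange.interpolate Finset.univ s
      (fun i => C + ∫ u in a..(s i), z₂.eval u)) :
    ∀ φ : Polynomial ℝ, φ.natDegree < k →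
      ∫ u in a..b, ((Polynomial.derivative z₁).eval u - z₂.eval u) * φ.eval u = 0 := by
  classical
  intro φ hφ
  -- integrability of polynomial products
  have cont : ∀ p q : Polynomial ℝ, IntervalIntegrable (fun u => p.eval u * q.eval u)
      MeasureTheory.volume a b := fun p q =>
    ((p.continuous).mul q.continuous).intervalIntegrable _ _
  -- a polynomial antiderivative of z₂
  set P : Polynomial ℝ := ∑ n ∈ Finset.range (z₂.natDegree + 1),
      Polynomial.C (z₂.coeff n / (n + 1)) * Polynomial.X ^ (n + 1) with hPdef
  have hP : Polynomial.derivative P = z₂ := by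
    rw [hPdef, map_sum]
    conv_rhs => rw [z₂.as_sum_range_C_mul_X_pow]
    refine Finset.sum_congr rfl fun n _ => ?_
    rw [Polynomial.derivative_C_mul, Polynomial.derivative_X_pow]
    push_cast
    rw [← mul_assoc, ← Polynomial.C_mul, div_mul_cancel₀]
    positivity
  have hPdeg : P.natDegree ≤ k + 1 := by
    refine Polynomial.natDegree_sum_le_of_forall_le _ _ fun n hn => ?_
    have hn' : n ≤ z₂.natDegree := Nat.lt_succ_iff.mp (Finset.mem_range.mp hn)
    calc (Polynomial.C (z₂.coeff n / (n + 1)) * Polynomial.X ^ (n + 1)).natDegree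
        ≤ (Polynomial.X ^ (n + 1) : Polynomial ℝ).natDegree := Polynomial.natDegree_C_mul_le _ _
      _ ≤ k + 1 := by rw [Polynomial.natDegree_X_pow]; omega
  set Fp : Polynomial ℝ := Polynomial.C (C - P.eval a) + P with hFpdef
  have hFpdeg : Fp.natDegree ≤ k + 1 :=
    le_trans (Polynomial.natDegree_add_le _ _) (by simp [hPdeg])
  have hFpeval : ∀ t : ℝ, Fp.eval t = C + ∫ u in a..t, z₂.eval u := by
    intro t
    have hint : ∫ u in a..t, z₂.eval u = P.eval t - P.eval a := by
      refine intervalIntegral.integral_eq_sub_of_hasDerivAt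
          (f := fun x => P.eval x) (f' := fun x => z₂.eval x) (fun x _ => ?_) ?_
      · simpa [hP] using P.hasDerivAt x
      · exact z₂.continuous.intervalIntegrable _ _
    simp [hFpdef, hint]; ring
  set c : ℝ := Fp.coeff (k + 1) with hcdef
  set g : Polynomial ℝ := Fp - Polynomial.C c * ω with hgdef
  have hgdeg : g.degree < ((k + 1 : ℕ) : WithBot ℕ) := by
    rw [Polynomial.degree_lt_iff_coeff_zero]
    intro m hm
    have hm' : k + 1 ≤ m := by exact_mod_cast hm
    rcases eq_or_lt_of_le hm' with hEq | hlt
    · have hω1 : ω.coeff (k + 1) = 1 := by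
        have := hmonic.coeff_natDegree
        rwa [hdeg] at this
      simp [hgdef, ← hEq, hω1, hcdef]
    · have h1 : Fp.coeff m = 0 := Polynomial.coeff_eq_zero_of_natDegree_lt (lt_of_le_of_lt hFpdeg hlt)
      have h2 : ω.coeff m = 0 := Polynomial.coeff_eq_zero_of_natDegree_lt (by omega)
      simp [hgdef, h1, h2]
  have hinj : Set.InjOn s ↑(Finset.univ : Finset (Fin (k + 1))) := hsmono.injective.injOn
  have hz₁g : z₁ = g := by
    rw [hz₁]
    symm
    refine Lagrange.eq_interpolate_of_eval_eq _ hinj (by simpa using hgdeg) fun i _ => ?_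
    simp [hgdef, hroot i, hFpeval (s i)]
  have hz₁' : Polynomial.derivative z₁ = z₂ - Polynomial.C c * Polynomial.derivative ω := by
    rw [hz₁g, hgdef, hFpdef]
    simp [Polynomial.derivative_C_mul, hP]
  -- key orthogonality: ∫ ω' φ = 0
  have key : ∫ u in a..b, (Polynomial.derivative ω).eval u * φ.eval u = 0 := by
    have h2 : ∫ u in a..b, ω.eval u * (Polynomial.derivative φ).eval u = 0 := by
      by_cases hc0 : φ.natDegree = 0
      · have : Polynomial.derivative φ = 0 := by
          rw [Polynomial.eq_C_of_natDegree_eq_zero hc0]; simp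
        simp [this]
      · refine horth _ ?_
        have := Polynomial.natDegree_derivative_lt (p := φ) hc0
        omega
    have h1 : ∫ u in a..b, (Polynomial.derivative (ω * φ)).eval u
        = (ω * φ).eval b - (ω * φ).eval a := by
      refine intervalIntegral.integral_eq_sub_of_hasDerivAt
          (f := fun x => (ω * φ).eval x)
          (f' := fun x => (Polynomial.derivative (ω * φ)).eval x) (fun x _ => ?_) ?_
      · exact (ω * φ).hasDerivAt x
      · exact (Polynomial.derivative (ω * φ)).continuous.intervalIntegrable _ _
    rw [Polynomial.derivative_mul] at h1
    have hsplit : ∫ u in a..b, ((Polynomial.derivative ω * φ + ω * Polynomial.derivative φ)).eval u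
        = (∫ u in a..b, (Polynomial.derivative ω).eval u * φ.eval u)
          + ∫ u in a..b, ω.eval u * (Polynomial.derivative φ).eval u := by
      simp only [Polynomial.eval_add, Polynomial.eval_mul]
      exact intervalIntegral.integral_add (cont _ _) (cont _ _)
    rw [hsplit] at h1
    have hrhs : (ω * φ).eval b - (ω * φ).eval a = 0 := by
      simp [hωa, hωb]
    rw [hrhs] at h1
    linarith
  have hfun : ∀ u : ℝ, ((Polynomial.derivative z₁).eval u - z₂.eval u) * φ.eval u
      = -c * ((Polynomial.derivative ω).eval u * φ.eval u) := by
    intro u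
    rw [hz₁']
    simp
    ring
  simp only [hfun]
  rw [intervalIntegral.integral_const_mul, key, mul_zero]
end

section
/- Let k ≥ 1 be an integer, let a < b be real numbers, and let e be a real polynomial of degree at most k. Then ∫_a^b e′(t) · (Π e)(t) dt = (e(b)² − e(a)²)/2, where e′ is the derivative of e. (Key energy identity used in the proof of Lemma 5.5: testing the time derivative with the L² projection of e onto polynomials of one degree less produces exact endpoint energy differences.) -/
/-! Since `e′` has degree `< k`, it is an admissible test function in the orthogonality
relation, which therefore lets `Pe` be replaced by `e`; and `e e′ = (e² / 2)′`. -/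

open Polynomial intervalIntegral MeasureTheory

theorem Polynomial.natDegree_derivative_lt_of_natDegree_le {R : Type*} [Semiring R] {p : R[X]}
    {k : ℕ} (hk : 1 ≤ k) (hp : p.natDegree ≤ k) : (derivative p).natDegree < k := by
  have := natDegree_derivative_le p
  omega

theorem Polynomial.integral_eval_mul_eval_derivative (p : ℝ[X]) (a b : ℝ) :
    ∫ s in a..b, p.eval s * (derivative p).eval s = (p.eval b ^ 2 - p.eval a ^ 2) / 2 := by
  have hderiv (x : ℝ) :
      HasDerivAt (fun s => p.eval s ^ 2 / 2) (p.eval x * (derivative p).eval x) x := by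
    refine (((p.hasDerivAt x).fun_pow 2).div_const 2).congr_deriv ?_
    push_cast
    ring
  rw [integral_eq_sub_of_hasDerivAt (fun x _ => hderiv x)
    ((p.continuous.mul (derivative p).continuous).intervalIntegrable a b)]
  ring

theorem intervalIntegral.integral_mul_eq_of_integral_sub_mul_eq_zero {a b : ℝ} {f g q : ℝ → ℝ}
    (hf : IntervalIntegrable (fun s => f s * q s) volume a b)
    (hg : IntervalIntegrable (fun s => g s * q s) volume a b)
    (h : ∫ s in a..b, (f s - g s) * q s = 0) :
    ∫ s in a..b, q s * g s = ∫ s in a..b, f s * q s := by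
  simp only [sub_mul] at h
  rw [integral_sub hf hg, sub_eq_zero] at h
  simp only [mul_comm (q _)]
  exact h.symm

theorem energy_identity_projection_test_general (k : ℕ) (hk : 1 ≤ k) (a b : ℝ)
    (e : Polynomial ℝ) (he : e.natDegree ≤ k)
    (Pe : Polynomial ℝ)
    (hproj : ∀ φ : Polynomial ℝ, φ.natDegree < k →
      ∫ s in a..b, (e.eval s - Pe.eval s) * φ.eval s = 0) :
    ∫ s in a..b, (Polynomial.derivative e).eval s * Pe.eval s =
      ((e.eval b) ^ 2 - (e.eval a) ^ 2) / 2 := by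
  have horth := hproj _ (natDegree_derivative_lt_of_natDegree_le hk he)
  rw [integral_mul_eq_of_integral_sub_mul_eq_zero
    ((e.continuous.mul (derivative e).continuous).intervalIntegrable a b)
    ((Pe.continuous.mul (derivative e).continuous).intervalIntegrable a b) horth]
  exact e.integral_eval_mul_eval_derivative a b

/-- Key energy identity: testing the time derivative of a polynomial `e` of degree at
most `k` with the `L²(a,b)`-projection of `e` onto polynomials of degree at most `k-1`
produces the exact endpoint energy difference. -/
theorem energy_identity_projection_test (k : ℕ) (hk : 1 ≤ k) (a b : ℝ) (hab : a < b)
    (e : Polynomial ℝ) (he : e.natDegree ≤ k)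
    (Pe : Polynomial ℝ) (hPedeg : Pe.natDegree < k)
    (hproj : ∀ φ : Polynomial ℝ, φ.natDegree < k →
      ∫ s in a..b, (e.eval s - Pe.eval s) * φ.eval s = 0) :
    ∫ s in a..b, (Polynomial.derivative e).eval s * Pe.eval s =
      ((e.eval b) ^ 2 - (e.eval a) ^ 2) / 2 :=
  energy_identity_projection_test_general k hk a b e he Pe hproj
end

section
/- Let t̂_1 < ⋯ < t̂_k be the Gauss points of (0,1). Let L^{G}_1, …, L^{G}_k be the Lagrange basis polynomials (of degree k−1) associated with the nodes t̂_1, …, t̂_k, and let L^{G,0}_0, L^{G,0}_1, …, L^{G,0}_k be the Lagrange basis polynomials (of degree k) associated with the augmented nodes 0, t̂_1, …, t̂_k. Define the k×k real matrix M by m_{ij} = ∫_0^1 (L^{G,0}_j)′(t) · L^{G}_i(t) dt for i, j = 1, …, k, and let D = diag(t̂_1, …, t̂_k). Then the matrix M̃ = D^{−1/2} M D^{1/2} is positive definite in the sense that xᵀ M̃ x > 0 for every nonzero x ∈ ℝ^k. (Positive definiteness of the similarity-transformed Gauss collocation matrix, due to Karakashian–Makridakis and used in the proof of Lemma 5.8.)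 -/
/-!
Put `c = D^{-1/2} x` and let `v` be the polynomial of degree `< k` interpolating `c` at the
Gauss points. The polynomial `X * v` has degree `≤ k`, vanishes at `0` and takes the values
`t̂_j c_j = (D^{1/2} x)_j` at the Gauss points, so it is the interpolant
`∑ⱼ (D^{1/2} x)_j L^{G,0}_j`.
Hence `xᵀ M̃ x = ∫₀¹ (X v)' v`, and integrating `2 (X v)' v = v² + (X v²)'` gives
`xᵀ M̃ x = (∫₀¹ v² + v(1)²) / 2 > 0`.
-/

open Polynomial Finset Lagrange

namespace Polynomial

lemma integral_eval_mul_self_pos {a b : ℝ} (hab : a < b) {w : ℝ[X]} (hw : w ≠ 0) :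
    0 < ∫ s in a..b, w.eval s * w.eval s := by
  obtain ⟨c, hc, hroot⟩ := (Set.Icc_infinite hab).exists_notMem_finset w.roots.toFinset
  refine intervalIntegral.integral_pos hab (w.continuous.mul w.continuous).continuousOn
    (fun s _ => mul_self_nonneg _) ⟨c, hc, mul_self_pos.mpr ?_⟩
  simpa [hw] using hroot

lemma integral_eval_derivative (p : ℝ[X]) (a b : ℝ) :
    ∫ s in a..b, (derivative p).eval s = p.eval b - p.eval a :=
  intervalIntegral.integral_eq_sub_of_hasDerivAt (fun x _ => p.hasDerivAt x)
    ((derivative p).continuous.intervalIntegrable _ _)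

lemma integral_eval_derivative_X_mul_mul (w : ℝ[X]) (a b : ℝ) :
    ∫ s in a..b, (derivative (X * w)).eval s * w.eval s =
      ((∫ s in a..b, w.eval s * w.eval s) + b * w.eval b * w.eval b
        - a * w.eval a * w.eval a) / 2 := by
  have hpt : ∀ s, (derivative (X * w)).eval s * w.eval s =
      (w.eval s * w.eval s + (derivative (X * w * w)).eval s) / 2 := by
    intro s
    simp only [derivative_mul, derivative_X, eval_mul, eval_add, eval_X, eval_one]
    ring
  simp_rw [hpt]
  rw [intervalIntegral.integral_div, intervalIntegral.integral_add
    (Continuous.intervalIntegrable (by fun_prop) _ _)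
    (Continuous.intervalIntegrable (by fun_prop) _ _), integral_eval_derivative]
  simp only [eval_mul, eval_X]
  ring

lemma integral_eval_derivative_X_mul_mul_pos {b : ℝ} (hb : 0 < b) {w : ℝ[X]} (hw : w ≠ 0) :
    0 < ∫ s in 0..b, (derivative (X * w)).eval s * w.eval s := by
  rw [integral_eval_derivative_X_mul_mul, zero_mul, zero_mul, sub_zero, mul_assoc]
  have hsq := integral_eval_mul_self_pos hb hw
  have hb_sq := mul_nonneg hb.le (mul_self_nonneg (w.eval b))
  linarith

end Polynomial

namespace Lagrange

variable {F : Type*} [Field F] {k : ℕ}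

lemma interpolate_cons_zero_eq_X_mul {t : Fin k → F} (ht : Function.Injective t)
    (ht0 : ∀ i, t i ≠ 0) (r : Fin k → F) :
    interpolate univ (Fin.cons 0 t) (Fin.cons 0 fun i => t i * r i) =
      X * interpolate univ t r := by
  have hinj : Function.Injective (Fin.cons (0 : F) t) :=
    Fin.cons_injective_of_injective (fun ⟨i, hi⟩ => ht0 i hi) ht
  refine (eq_interpolate_of_eval_eq _ hinj.injOn ?_ fun i _ => ?_).symm
  · have hr : (interpolate univ t r).degree < k := by
      simpa using degree_interpolate_lt (s := univ) r ht.injOn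
    rw [mul_comm, degree_mul_X, card_univ, Fintype.card_fin, Nat.cast_succ]
    exact WithBot.add_lt_add_right WithBot.one_ne_bot hr
  · cases i using Fin.cases with
    | zero => simp
    | succ i =>
      rw [Fin.cons_succ, Fin.cons_succ, eval_mul, eval_X,
        eval_interpolate_at_node r ht.injOn (mem_univ i)]

lemma sum_C_mul_derivative_basis_succ (t : Fin (k + 1) → F) (r : Fin k → F) :
    ∑ j : Fin k, C (r j) * derivative (Lagrange.basis univ t j.succ) =
      derivative (interpolate univ t (Fin.cons 0 r)) := by
  simp [interpolate_apply, Fin.sum_univ_succ]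

end Lagrange

namespace Matrix

lemma dotProduct_mulVec_of_eq_mul_mul {ι R : Type*} [Fintype ι] [CommSemiring R]
    {A B : Matrix ι ι R} {a b : ι → R} (h : ∀ i j, B i j = a i * A i j * b j) (x y : ι → R) :
    x ⬝ᵥ B *ᵥ y = (a * x) ⬝ᵥ A *ᵥ (b * y) := by
  simp only [dotProduct, mulVec, h, Pi.mul_apply, mul_sum]
  exact sum_congr rfl fun i _ => sum_congr rfl fun j _ => by ring

lemma dotProduct_mulVec_eq_integral {ι : Type*} [Fintype ι] {A : Matrix ι ι ℝ}
    {f g : ι → ℝ[X]} {a b : ℝ}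
    (hA : ∀ i j, A i j = ∫ s in a..b, (f j).eval s * (g i).eval s) (x y : ι → ℝ) :
    x ⬝ᵥ A *ᵥ y = ∫ s in a..b, (∑ j, C (y j) * f j).eval s * (∑ i, C (x i) * g i).eval s := by
  have hpt : ∀ s, (∑ j, C (y j) * f j).eval s * (∑ i, C (x i) * g i).eval s =
      ∑ i, x i * ∑ j, (f j).eval s * (g i).eval s * y j := by
    intro s
    simp only [eval_finsetSum, eval_mul, eval_C, sum_mul, mul_sum]
    exact sum_congr rfl fun i _ => sum_congr rfl fun j _ => by ring
  simp_rw [hpt]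
  rw [intervalIntegral.integral_finsetSum fun i _ =>
    Continuous.intervalIntegrable (by fun_prop) _ _]
  refine sum_congr rfl fun i _ => ?_
  rw [intervalIntegral.integral_const_mul, intervalIntegral.integral_finsetSum fun j _ =>
    Continuous.intervalIntegrable (by fun_prop) _ _]
  simp only [intervalIntegral.integral_mul_const, mulVec, dotProduct, hA]

end Matrix

theorem gauss_collocation_matrix_posDef_general (k : ℕ)
    (t : Fin k → ℝ) (htmono : StrictMono t) (htmem : ∀ i, t i ∈ Set.Ioo (0:ℝ) 1)
    (M : Matrix (Fin k) (Fin k) ℝ)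
    (hM : ∀ i j, M i j = ∫ s in (0:ℝ)..1,
      (Polynomial.derivative
          (Lagrange.basis Finset.univ (Fin.cons (0:ℝ) t) j.succ)).eval s *
        (Lagrange.basis Finset.univ t i).eval s)
    (Mt : Matrix (Fin k) (Fin k) ℝ)
    (hMt : ∀ i j, Mt i j = (Real.sqrt (t i))⁻¹ * M i j * Real.sqrt (t j)) :
    ∀ x : Fin k → ℝ, x ≠ 0 → 0 < dotProduct x (Mt.mulVec x) := by
  intro x hx
  have ht0 i : 0 < t i := (htmem i).1
  set c := (fun i => (√(t i))⁻¹) * x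
  have hsqrt : (fun j => √(t j)) * x = fun j => t j * c j := by
    funext j
    have hsqrt_ne : √(t j) ≠ 0 := Real.sqrt_ne_zero'.mpr (ht0 j)
    simp only [c, Pi.mul_apply]
    field_simp
    rw [Real.sq_sqrt (ht0 j).le, mul_comm]
  have hc : interpolate univ t c ≠ 0 := by
    contrapose! hx
    funext i
    have hci := eval_interpolate_at_node c htmono.injective.injOn (mem_univ i)
    rw [hx, eval_zero] at hci
    simpa [c, Real.sqrt_ne_zero'.mpr (ht0 i)] using hci.symm
  rw [Matrix.dotProduct_mulVec_of_eq_mul_mul hMt, Matrix.dotProduct_mulVec_eq_integral hM, hsqrt,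
    sum_C_mul_derivative_basis_succ, interpolate_cons_zero_eq_X_mul htmono.injective
      (fun i => (ht0 i).ne') c, ← interpolate_apply]
  exact integral_eval_derivative_X_mul_mul_pos one_pos hc

/-- Positive definiteness of the similarity-transformed Gauss collocation matrix
`M̃ = D^{-1/2} M D^{1/2}` (Karakashian–Makridakis), where
`m_{ij} = ∫_0^1 (L^{G,0}_j)'(t) L^G_i(t) dt` and `D = diag(t̂_1, …, t̂_k)`. -/
theorem gauss_collocation_matrix_posDef (k : ℕ) (hk : 1 ≤ k)
    (q : Polynomial ℝ) (hmonic : q.Monic) (hdeg : q.natDegree = k)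
    (horth : ∀ p : Polynomial ℝ, p.natDegree < k →
      ∫ s in (0:ℝ)..1, q.eval s * p.eval s = 0)
    (t : Fin k → ℝ) (htmono : StrictMono t) (htmem : ∀ i, t i ∈ Set.Ioo (0:ℝ) 1)
    (htroot : ∀ i, q.eval (t i) = 0)
    (M : Matrix (Fin k) (Fin k) ℝ)
    (hM : ∀ i j, M i j = ∫ s in (0:ℝ)..1,
      (Polynomial.derivative
          (Lagrange.basis Finset.univ (Fin.cons (0:ℝ) t) j.succ)).eval s *
        (Lagrange.basis Finset.univ t i).eval s)
    (Mt : Matrix (Fin k) (Fin k) ℝ)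
    (hMt : ∀ i j, Mt i j = (Real.sqrt (t i))⁻¹ * M i j * Real.sqrt (t j)) :
    ∀ x : Fin k → ℝ, x ≠ 0 → 0 < dotProduct x (Mt.mulVec x) :=
  gauss_collocation_matrix_posDef_general k t htmono htmem M hM Mt hMt
end
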